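/- arXiv:2506.04647 — 3 statements merged into one kernel-verified Lean document; each statement's English description precedes it below -/
import Mathlib

section
/- Let α be a type, h : α → α → α any function, and d a natural number. For leaves L : Fin (2^d) → α define the Merkle root recursively by Root(0, L) = L(0) and Root(d+1, L) = h(Root(d, L restricted to the first 2^d indices), Root(d, L restricted to the last 2^d indices)). For an index i ∈ Fin (2^d), define the authentication path sib(d, L, i) : Fin d → α recursively so that sib lists, from the leaf level upward, the roots of the sibling subtrees along the path from leaf i to the root, and define the verification fold fold(d, i, x, s) by starting with x and, for k = 0,…,d−1, combining acc with s(k) via acc ↦ h(acc, s(k)) if the k-th binary digit of i is 0 and acc ↦ h(s(k), acc) if it is 1. Then for every i, fold(d, i, L(i), sib(d, L, i)) = Root(d, L). -/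
/-- The root of a complete Merkle tree of depth `d` over leaves `L : Fin (2^d) → α`,
built with the two-argument hash `h`. -/
def merkleRoot {α : Type*} (h : α → α → α) : (d : ℕ) → (Fin (2 ^ d) → α) → α
  | 0, L => L ⟨0, by norm_num⟩
  | d + 1, L =>
      h (merkleRoot h d (fun i => L ⟨i.val, by
            have := i.isLt; have : (2:ℕ) ^ d ≤ 2 ^ (d+1) := Nat.pow_le_pow_right (by norm_num) (by omega)
            omega⟩))
        (merkleRoot h d (fun i => L ⟨2 ^ d + i.val, by
            have := i.isLt; have h2 : (2:ℕ) ^ (d+1) = 2 ^ d + 2 ^ d := by ring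
            omega⟩))

/-- The authentication path of leaf `i`: the roots of the sibling subtrees along the
path from leaf `i` to the root, listed from the leaf level upward. -/
def merkleSib {α : Type*} (h : α → α → α) : (d : ℕ) → (Fin (2 ^ d) → α) → Fin (2 ^ d) → Fin d → α
  | 0, _, _ => fun k => k.elim0
  | d + 1, L, i => fun k =>
      if hi : i.val < 2 ^ d then
        -- leaf in the left half
        if hk : k.val < d then
          merkleSib h d (fun j => L ⟨j.val, by
              have := j.isLt
              have : (2:ℕ) ^ d ≤ 2 ^ (d+1) := Nat.pow_le_pow_right (by norm_num) (by omega)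
              omega⟩) ⟨i.val, hi⟩ ⟨k.val, hk⟩
        else
          merkleRoot h d (fun j => L ⟨2 ^ d + j.val, by
              have := j.isLt; have h2 : (2:ℕ) ^ (d+1) = 2 ^ d + 2 ^ d := by ring
              omega⟩)
      else
        -- leaf in the right half
        if hk : k.val < d then
          merkleSib h d (fun j => L ⟨2 ^ d + j.val, by
              have := j.isLt; have h2 : (2:ℕ) ^ (d+1) = 2 ^ d + 2 ^ d := by ring
              omega⟩) ⟨i.val - 2 ^ d, by
              have := i.isLt; have h2 : (2:ℕ) ^ (d+1) = 2 ^ d + 2 ^ d := by ring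
              omega⟩ ⟨k.val, hk⟩
        else
          merkleRoot h d (fun j => L ⟨j.val, by
              have := j.isLt
              have : (2:ℕ) ^ d ≤ 2 ^ (d+1) := Nat.pow_le_pow_right (by norm_num) (by omega)
              omega⟩)

/-- The verification fold: starting from `x`, for `k = 0, …, d-1` combine the
accumulator with `s k`, on the side determined by the `k`-th binary digit of `i`
(`acc ↦ h acc (s k)` if the digit is `0`, and `acc ↦ h (s k) acc` if it is `1`). -/
def merkleFold {α : Type*} (h : α → α → α) : (d : ℕ) → ℕ → α → (Fin d → α) → α
  | 0, _, x, _ => x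
  | d + 1, i, x, s =>
      merkleFold h d (i / 2)
        (if i % 2 = 0 then h x (s 0) else h (s 0) x)
        (fun k => s k.succ)

/-!
Induction on the depth. Read from its last step, the fold hashes the fold over the lower `d`
levels with the last path entry, on the side given by bit `d` of the index, that is, by the half
of the tree holding the leaf. The lower levels read only the low `d` bits of the index, so they
verify the same leaf within that half and return its root by induction; the last path entry is
the root of the other half.
-/

section Merkle

variable {α : Type*}

def leftHalf {d : ℕ} (L : Fin (2 ^ (d + 1)) → α) : Fin (2 ^ d) → α :=
  fun j => L ⟨j.val, by have := j.isLt; have := Nat.pow_succ 2 d; omega⟩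

def rightHalf {d : ℕ} (L : Fin (2 ^ (d + 1)) → α) : Fin (2 ^ d) → α :=
  fun j => L ⟨2 ^ d + j.val, by have := j.isLt; have := Nat.pow_succ 2 d; omega⟩

theorem exists_eq_two_pow_add_of_two_pow_le {d : ℕ} (i : Fin (2 ^ (d + 1))) (hi : 2 ^ d ≤ i.val) :
    ∃ j : Fin (2 ^ d), i.val = 2 ^ d + j.val :=
  ⟨⟨i.val - 2 ^ d, by have := i.isLt; have := Nat.pow_succ 2 d; omega⟩, by simp only; omega⟩

variable (h : α → α → α)

theorem merkleRoot_succ (d : ℕ) (L : Fin (2 ^ (d + 1)) → α) :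
    merkleRoot h (d + 1) L = h (merkleRoot h d (leftHalf L)) (merkleRoot h d (rightHalf L)) :=
  rfl

theorem merkleFold_mod_two_pow (d i : ℕ) (x : α) (s : Fin d → α) :
    merkleFold h d (i % 2 ^ d) x s = merkleFold h d i x s := by
  induction d generalizing i x with
  | zero => rfl
  | succ d ih =>
    have hbit : i % 2 ^ (d + 1) % 2 = i % 2 :=
      Nat.mod_mod_of_dvd i (dvd_pow_self 2 d.succ_ne_zero)
    have hrest : i % 2 ^ (d + 1) / 2 = i / 2 % 2 ^ d := by
      rw [pow_succ', Nat.mod_mul_right_div_self]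
    simp only [merkleFold, hbit, hrest, ih]

theorem merkleFold_succ' (d i : ℕ) (x : α) (s : Fin (d + 1) → α) :
    merkleFold h (d + 1) i x s =
      if i / 2 ^ d % 2 = 0 then h (merkleFold h d i x (Fin.init s)) (s (Fin.last d))
      else h (s (Fin.last d)) (merkleFold h d i x (Fin.init s)) := by
  induction d generalizing i x with
  | zero => simp [merkleFold]
  | succ d ih =>
    rw [merkleFold, ih, Nat.div_div_eq_div_mul, ← pow_succ']
    rfl

section Sib

variable {d : ℕ} (L : Fin (2 ^ (d + 1)) → α) (i : Fin (2 ^ (d + 1)))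

theorem merkleSib_init_of_lt (hi : i.val < 2 ^ d) :
    Fin.init (merkleSib h (d + 1) L i) = merkleSib h d (leftHalf L) ⟨i.val, hi⟩ := by
  funext k
  simp only [Fin.init, merkleSib, hi, ↓reduceDIte, Fin.val_castSucc, Fin.is_lt]
  rfl

theorem merkleSib_last_of_lt (hi : i.val < 2 ^ d) :
    merkleSib h (d + 1) L i (Fin.last d) = merkleRoot h d (rightHalf L) := by
  simp only [merkleSib, hi, ↓reduceDIte, Fin.val_last, lt_self_iff_false]
  rfl

theorem merkleSib_init_of_eq_two_pow_add (j : Fin (2 ^ d)) (hij : i.val = 2 ^ d + j.val) :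
    Fin.init (merkleSib h (d + 1) L i) = merkleSib h d (rightHalf L) j := by
  funext k
  simp only [Fin.init, merkleSib, hij, add_lt_iff_neg_left, not_lt_zero, ↓reduceDIte,
    Fin.val_castSucc, Fin.is_lt, add_tsub_cancel_left]
  rfl

theorem merkleSib_last_of_two_pow_le (hi : 2 ^ d ≤ i.val) :
    merkleSib h (d + 1) L i (Fin.last d) = merkleRoot h d (leftHalf L) := by
  simp only [merkleSib, not_lt.mpr hi, ↓reduceDIte, Fin.val_last, lt_self_iff_false]
  rfl

end Sib

end Merkle

/-- Correctness of the Merkle-tree scheme: an honestly generated authentication path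
for a leaf always re-derives the root. -/
theorem merkle_verify_correct {α : Type*} (h : α → α → α) (d : ℕ)
    (L : Fin (2 ^ d) → α) (i : Fin (2 ^ d)) :
    merkleFold h d i.val (L i) (merkleSib h d L i) = merkleRoot h d L := by
  induction d with
  | zero => exact congrArg L (Fin.ext (Nat.lt_one_iff.mp i.isLt))
  | succ d ih =>
    rw [merkleFold_succ', merkleRoot_succ]
    rcases lt_or_ge i.val (2 ^ d) with hi | hi
    · have hbit : i.val / 2 ^ d % 2 = 0 := by rw [Nat.div_eq_of_lt hi]
      rw [if_pos hbit, merkleSib_init_of_lt h L i hi, merkleSib_last_of_lt h L i hi]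
      exact congrArg (h · _) (ih (leftHalf L) ⟨i.val, hi⟩)
    · obtain ⟨j, hij⟩ := exists_eq_two_pow_add_of_two_pow_le i hi
      have hbit : i.val / 2 ^ d % 2 = 1 := by
        rw [hij, Nat.add_div_left _ (by positivity), Nat.div_eq_of_lt j.isLt]
      have hrest : i.val % 2 ^ d = j.val := by rw [hij, Nat.add_mod_left, Nat.mod_eq_of_lt j.isLt]
      have hleaf : L i = rightHalf L j := congrArg L (Fin.ext hij)
      rw [if_neg (by omega), merkleSib_init_of_eq_two_pow_add h L i j hij,
        merkleSib_last_of_two_pow_le h L i hi, ← merkleFold_mod_two_pow, hrest, hleaf]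
      exact congrArg (h _) (ih (rightHalf L) j)
end

section
/- Let α be a type and h : α → α → α be pairwise injective, i.e., h(a, b) = h(a', b') implies a = a' and b = b'. Fix a natural number d and an index i ∈ Fin (2^d), and define the verification fold fold(d, i, x, s), for x : α and s : Fin d → α, by starting with x and, for k = 0,…,d−1, replacing acc by h(acc, s(k)) if the k-th binary digit of i is 0 and by h(s(k), acc) if it is 1. Then the map (x, s) ↦ fold(d, i, x, s) is injective: if fold(d, i, x, s) = fold(d, i, x', s'), then x = x' and s = s'. -/
section

variable {α : Type*} {h : α → α → α}

theorem Function.Injective2.ite_flip (hh : Function.Injective2 h) (p : Prop) [Decidable p]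
    {x x' y y' : α}
    (heq : (if p then h x y else h y x) = (if p then h x' y' else h y' x')) :
    x = x' ∧ y = y' := by
  by_cases hp : p
  · rw [if_pos hp, if_pos hp] at heq
    exact hh heq
  · rw [if_neg hp, if_neg hp] at heq
    exact (hh heq).symm

theorem eq_and_eq_of_merkleFold_eq (hh : Function.Injective2 h) {d i : ℕ} {x x' : α}
    {s s' : Fin d → α}
    (hfold : merkleFold h d i x s = merkleFold h d i x' s') :
    x = x' ∧ s = s' := by
  induction d generalizing i x x' with
  | zero => exact ⟨hfold, Subsingleton.elim s s'⟩
  | succ d ih =>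
    obtain ⟨hstep, htail⟩ := ih hfold
    obtain ⟨hx, hs0⟩ := hh.ite_flip (i % 2 = 0) hstep
    exact ⟨hx, funext (Fin.cases hs0 (congrFun htail))⟩

end

/-- Idealized Uniqueness and Soundness of Merkle-tree verification: if `h` is
pairwise injective, then for a fixed depth `d` and leaf index `i`, the map
`(x, s) ↦ fold d i x s` is injective. -/
theorem merkleFold_injective {α : Type*} (h : α → α → α)
    (hinj : ∀ a b a' b', h a b = h a' b' → a = a' ∧ b = b')
    (d : ℕ) (i : Fin (2 ^ d))
    (x x' : α) (s s' : Fin d → α)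
    (hfold : merkleFold h d i.val x s = merkleFold h d i.val x' s') :
    x = x' ∧ s = s' :=
  eq_and_eq_of_merkleFold_eq (fun _ _ _ _ hab => hinj _ _ _ _ hab) hfold
end

section
/- Let α be a type and h : α → α → α be pairwise injective, i.e., h(a, b) = h(a', b') implies a = a' and b = b'. Let d be a natural number, L : Fin (2^d) → α a leaf assignment with Merkle root r = Root(d, L) (defined recursively by Root(0, L) = L(0) and Root(d+1, L) = h(Root of left half, Root of right half)), and let i ∈ Fin (2^d). If x* ≠ L(i), then for every claimed sibling path s : Fin d → α, the verification fold fold(d, i, x*, s) — obtained by starting with x* and, for k = 0,…,d−1, combining with s(k) on the side determined by the k-th binary digit of i — is not equal to r. -/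
section

variable {α : Type*}

def merkleParents (h : α → α → α) (d : ℕ) (L : Fin (2 ^ (d + 1)) → α) :
    Fin (2 ^ d) → α :=
  fun j => h (L ⟨2 * j, by have := j.isLt; rw [pow_succ]; omega⟩)
    (L ⟨2 * j + 1, by have := j.isLt; rw [pow_succ]; omega⟩)

theorem merkleRoot_succ_eq_merkleRoot_merkleParents (h : α → α → α) (d : ℕ)
    (L : Fin (2 ^ (d + 1)) → α) :
    merkleRoot h (d + 1) L = merkleRoot h d (merkleParents h d L) := by
  induction d with
  | zero => rfl
  | succ d ih =>
    rw [merkleRoot, ih, ih]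
    congr 2
    funext j
    dsimp only [merkleParents]
    congr 2 <;> ext <;> simp only [pow_succ] <;> ring

theorem eq_of_foldStep_eq_merkleParents {h : α → α → α} (hh : Function.Injective2 h)
    {d : ℕ} {L : Fin (2 ^ (d + 1)) → α} {i : Fin (2 ^ (d + 1))} {x t : α}
    (hi : (i : ℕ) / 2 < 2 ^ d)
    (heq : (if (i : ℕ) % 2 = 0 then h x t else h t x) = merkleParents h d L ⟨i / 2, hi⟩) :
    x = L i := by
  dsimp only [merkleParents] at heq
  split_ifs at heq
  · rw [(hh heq).1]
    congr
    omega
  · rw [(hh heq).2]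
    congr
    omega

theorem eq_of_merkleFold_eq_merkleRoot {h : α → α → α} (hh : Function.Injective2 h)
    {d : ℕ} {L : Fin (2 ^ d) → α} {i : Fin (2 ^ d)} {x : α} {s : Fin d → α}
    (heq : merkleFold h d i x s = merkleRoot h d L) : x = L i := by
  induction d generalizing x with
  | zero => exact heq.trans (congrArg L (Fin.ext (by simp)))
  | succ d ih =>
    rw [merkleRoot_succ_eq_merkleRoot_merkleParents] at heq
    have hi : (i : ℕ) / 2 < 2 ^ d := Nat.div_lt_of_lt_mul (pow_succ' 2 d ▸ i.isLt)
    exact eq_of_foldStep_eq_merkleParents hh hi (ih (i := ⟨(i : ℕ) / 2, hi⟩) heq)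

end

/-- Deterministic core of the Integrity theorem for the authenticated PSI
constructions: with a collision-free compression function, no tampered leaf value
`x* ≠ L i` admits a sibling path that verifies against the announced root. -/
theorem merkle_integrity {α : Type*} (h : α → α → α)
    (hinj : ∀ a b a' b', h a b = h a' b' → a = a' ∧ b = b')
    (d : ℕ) (L : Fin (2 ^ d) → α) (i : Fin (2 ^ d))
    (xstar : α) (hx : xstar ≠ L i) :
    ∀ s : Fin d → α, merkleFold h d i.val xstar s ≠ merkleRoot h d L :=
  fun _ hs => hx (eq_of_merkleFold_eq_merkleRoot (fun _ _ _ _ => hinj _ _ _ _) hs)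
end
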